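/- Partition Theorem: Let S have length n, W the collection of k+1 words W'_i = S[Ω(i), PSA[i]-1] · #_i, l = k+1, m = n+l. Then the multi-string BWT of W satisfies BWT(W)[i] = BWT(S)[i] for 0 ≤ i < l, BWT(W)[i] = # for l ≤ i < 2l, and BWT(W)[i] = BWT(S)[i-l] for 2l ≤ i < m. Consequently BWT(S) = BWT(W)[0..l-1] ++ BWT(W)[2l..m-1]. -/

import Mathlib

/-- Suffix of the extended string `S` (length `n`, sentinel `S n = 0`) starting at `i`,
as a list of characters. -/
def sfx (S : ℕ → ℕ) (n i : ℕ) : List ℕ :=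
  (List.range (n + 1 - i)).map (fun t => S (i + t))

/-- `S` is a string of length `n` over a positive alphabet with the unique smallest
sentinel `0` appended at position `n`. -/
def Sentinel (S : ℕ → ℕ) (n : ℕ) : Prop :=
  S n = 0 ∧ ∀ i < n, 0 < S i

/-- `SA` is the suffix array of `S` on positions `0..n`: a bijection of `{0,…,n}`
listing the suffixes in strictly increasing lexicographic order. -/
def IsSuffixArray (S : ℕ → ℕ) (n : ℕ) (SA : ℕ → ℕ) : Prop :=
  Set.BijOn SA (Set.Iic n) (Set.Iic n) ∧
  ∀ i j : ℕ, i ≤ n → j ≤ n → i < j →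
    List.Lex (· < ·) (sfx S n (SA i)) (sfx S n (SA j))

/-- `Ω(j) = max({-1} ∪ {t ∈ PSA : t ≤ PSA[j]-1})`, where `PSA = SA[0..k]`. -/
def Omega (SA : ℕ → ℕ) (k j : ℕ) : ℤ :=
  (insert (-1 : ℤ)
    (((Finset.range (k+1)).filter (fun t => SA t < SA j)).image
      (fun t => (SA t : ℤ)))).max' (Finset.insert_nonempty _ _)

/-- Character of `S` at an integer position: positions `-1` and `n` carry the
sentinel `0` (written `$`), characters of `Σ` are positive. -/
def Sc (S : ℕ → ℕ) (n : ℕ) (q : ℤ) : ℤ :=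
  if 0 ≤ q ∧ q < n then (S q.toNat : ℤ) else 0

/-- `BWT(S)[i] = S[SA[i]-1]` with `S[-1] = $`. -/
def bwtS (S : ℕ → ℕ) (n : ℕ) (SA : ℕ → ℕ) (i : ℕ) : ℤ :=
  Sc S n ((SA i : ℤ) - 1)

/-- The word `W_j = S[Ω(j) .. PSA[j]-1]` as a list of characters. -/
def wordList (S : ℕ → ℕ) (n : ℕ) (SA : ℕ → ℕ) (k j : ℕ) : List ℤ :=
  (List.range ((SA j : ℤ) - Omega SA k j).toNat).map
    (fun t => Sc S n (Omega SA k j + t))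

/-- The marked word `W'_j = W_j · #_j`, where the distinct markers are encoded as
`#_j = j - (k+1)`, so that `#_0 < … < #_k < $ = 0 < Σ`. -/
def wordM (S : ℕ → ℕ) (n : ℕ) (SA : ℕ → ℕ) (k j : ℕ) : List ℤ :=
  wordList S n SA k j ++ [(j : ℤ) - (k + 1)]

/-- A position `q ∈ {0,…,n}` of `S` viewed in `{-1,…,n-1}`: position `n` is
identified with `-1` (first right rotation). -/
def posZ (n q : ℕ) : ℤ := if q = n then -1 else (q : ℤ)

/-- `SAW`/`DAW` form the (suffix array, document array) pair for the collection
`Wc 0, …, Wc (l-1)`: the `i`-th lexicographically smallest of the `m` suffixes of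
the collection is `(Wc (DAW i)).drop (SAW i)`. -/
def IsMSA (Wc : ℕ → List ℤ) (l m : ℕ) (SAW DAW : ℕ → ℕ) : Prop :=
  (∀ i < m, DAW i < l ∧ SAW i < (Wc (DAW i)).length) ∧
  (∀ j < l, ∀ p < (Wc j).length, ∃! i, i < m ∧ DAW i = j ∧ SAW i = p) ∧
  ∀ i j : ℕ, i < m → j < m → i < j →
    List.Lex (· < ·) ((Wc (DAW i)).drop (SAW i)) ((Wc (DAW j)).drop (SAW j))

/-- Multi-string BWT: the character cyclically preceding the `i`-th smallest
suffix within its word. -/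
def bwtW (Wc : ℕ → List ℤ) (SAW DAW : ℕ → ℕ) (i : ℕ) : ℤ :=
  (Wc (DAW i)).getD ((SAW i + (Wc (DAW i)).length - 1) % (Wc (DAW i)).length) 0

/-!
The intervals `[Ω(j), PSA[j])` partition the rotated text `[-1, n)`, and a position starts its
word exactly when its suffix has rank at most `k`. Reading a suffix of `W'_j` against one of
`W'_{j'}` follows the comparison of the corresponding suffixes of `S` until a marker is met.
Markers are below every letter; if both words end at the same step, the suffixes of `S` at
`PSA[j]` and `PSA[j']` compare like `j` and `j'`, hence like `#_j` and `#_{j'}`; and the word with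
the smaller suffix cannot be the one that continues, since a position strictly inside a word has
rank above `k`. Hence the suffixes of the collection in increasing order are the lone markers
`#_0 < ⋯ < #_k`, followed by the suffixes starting at the positions of `S` in suffix-array order.
The multi-string suffix array is the unique sorted enumeration of the suffixes, so the BWT is
read off: a lone marker is preceded by the last letter of its word, a word start by its marker,
and every other position by the same letter as in `S`.
-/

open Set

theorem StrictMonoOn.eqOn_of_image_eq {β : Type*} [Preorder β] {f g : ℕ → β} {m : ℕ}
    (hf : StrictMonoOn f (Iio m)) (hg : StrictMonoOn g (Iio m))
    (h : f '' Iio m = g '' Iio m) : EqOn f g (Iio m) := by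
  have mono_fin {φ : ℕ → β} (hφ : StrictMonoOn φ (Iio m)) :
      StrictMono fun i : Fin m => φ i :=
    fun a b hab => hφ a.is_lt b.is_lt hab
  have range_fin (φ : ℕ → β) : range (fun i : Fin m => φ i) = φ '' Iio m := by
    ext b
    simp [Fin.exists_iff]
  have hfg := ((mono_fin hf).range_inj (mono_fin hg)).1 (by rw [range_fin, range_fin, h])
  exact fun i hi => congrFun hfg ⟨i, hi⟩

theorem List.drop_concat_inj {α : Type*} {l l' : List α} {a a' : α} {p p' : ℕ}
    (hp : p ≤ l.length) (hp' : p' ≤ l'.length) (h : (l ++ [a]).drop p = (l' ++ [a']).drop p') :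
    a = a' ∧ l.length - p = l'.length - p' := by
  rw [List.drop_append_of_le_length hp, List.drop_append_of_le_length hp'] at h
  exact ⟨by simpa using congrArg List.getLast? h, by simpa using congrArg List.length h⟩

theorem List.map_range_append_map_range_eq {α : Type*} {f g : ℕ → α} {k N c : ℕ}
    (hlow : ∀ i ≤ k, f i = g i) (hhigh : ∀ t < N, f (c + t) = g (k + 1 + t)) :
    (List.range (k + 1)).map f ++ (List.range N).map (fun t => f (c + t)) =
      (List.range (k + 1 + N)).map g := by
  rw [List.range_add (n := k + 1), List.map_append, List.map_map]
  congr 1 <;> apply List.map_congr_left <;> intro i hi <;> simp only [List.mem_range] at hi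
  · exact hlow i (by omega)
  · exact hhigh i hi

def suffixes (Wc : ℕ → List ℤ) (l : ℕ) : Set (List ℤ) :=
  {s | ∃ j < l, ∃ p < (Wc j).length, (Wc j).drop p = s}

namespace IsMSA

variable {Wc : ℕ → List ℤ} {l m : ℕ} {SAW DAW : ℕ → ℕ}

theorem strictMonoOn (h : IsMSA Wc l m SAW DAW) :
    StrictMonoOn (fun i => (Wc (DAW i)).drop (SAW i)) (Iio m) :=
  fun i hi j hj hij => h.2.2 i j hi hj hij

theorem image_eq (h : IsMSA Wc l m SAW DAW) :
    (fun i => (Wc (DAW i)).drop (SAW i)) '' Iio m = suffixes Wc l := by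
  ext s
  constructor
  · rintro ⟨i, hi, rfl⟩
    exact ⟨DAW i, (h.1 i hi).1, SAW i, (h.1 i hi).2, rfl⟩
  · rintro ⟨j, hj, p, hp, rfl⟩
    obtain ⟨i, ⟨hi, rfl, rfl⟩, -⟩ := h.2.1 j hj p hp
    exact ⟨i, hi, rfl⟩

end IsMSA

section SuffixArray

variable {S SA : ℕ → ℕ} {n : ℕ}

theorem sfx_self (S : ℕ → ℕ) (n : ℕ) : sfx S n n = [S n] := by
  simp [sfx]

theorem sfx_of_lt (S : ℕ → ℕ) {n i : ℕ} (h : i < n) :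
    sfx S n i = S i :: sfx S n (i + 1) := by
  rw [sfx, sfx, show n + 1 - i = n + 1 - (i + 1) + 1 by omega, List.range_succ_eq_map]
  simp only [List.map_cons, List.map_map, Nat.add_zero]
  congr 1
  exact List.map_congr_left fun t _ => by simp only [Function.comp_apply]; congr 1; omega

theorem Sentinel.sfx_length_lt (hS : Sentinel S n) {i : ℕ} (hi : i < n) :
    sfx S n n < sfx S n i := by
  rw [sfx_self, sfx_of_lt S hi, hS.1]
  exact List.Lex.rel (hS.2 i hi)

namespace IsSuffixArray

theorem le (hSA : IsSuffixArray S n SA) {i : ℕ} (h : i ≤ n) : SA i ≤ n :=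
  hSA.1.mapsTo h

theorem exists_eq (hSA : IsSuffixArray S n SA) {b : ℕ} (h : b ≤ n) : ∃ i ≤ n, SA i = b :=
  hSA.1.surjOn h

theorem strictMonoOn (hSA : IsSuffixArray S n SA) :
    StrictMonoOn (fun i => sfx S n (SA i)) (Iic n) :=
  fun i hi j hj hij => hSA.2 i j hi hj hij

theorem lt_of_sfx_lt (hSA : IsSuffixArray S n SA) {i j : ℕ} (hi : i ≤ n) (hj : j ≤ n)
    (h : sfx S n (SA i) < sfx S n (SA j)) : i < j :=
  (hSA.strictMonoOn.lt_iff_lt hi hj).1 h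

theorem zero_eq (hS : Sentinel S n) (hSA : IsSuffixArray S n SA) : SA 0 = n := by
  obtain ⟨i, hi, hin⟩ := hSA.exists_eq le_rfl
  by_contra h0
  have hi0 : 0 < i := Nat.pos_of_ne_zero (by rintro rfl; exact h0 hin)
  have hlt : sfx S n (SA 0) < sfx S n (SA i) := hSA.2 0 i (Nat.zero_le n) hi hi0
  rw [hin] at hlt
  exact lt_asymm hlt (hS.sfx_length_lt (lt_of_le_of_ne (hSA.le (Nat.zero_le n)) h0))

theorem eq_length_iff (hS : Sentinel S n) (hSA : IsSuffixArray S n SA) {r : ℕ} (hr : r ≤ n) :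
    SA r = n ↔ r = 0 := by
  rw [← hSA.zero_eq hS]
  exact ⟨fun h => hSA.1.injOn hr (Nat.zero_le n) h, fun h => h ▸ rfl⟩

end IsSuffixArray

end SuffixArray

section Partition

variable {S SA : ℕ → ℕ} {n k : ℕ}

theorem neg_one_le_omega (SA : ℕ → ℕ) (k j : ℕ) : -1 ≤ Omega SA k j :=
  Finset.le_max' _ _ (Finset.mem_insert_self _ _)

theorem le_omega {t j : ℕ} (ht : t ≤ k) (h : SA t < SA j) : (SA t : ℤ) ≤ Omega SA k j :=
  Finset.le_max' _ _ (Finset.mem_insert_of_mem (Finset.mem_image_of_mem (fun t => (SA t : ℤ))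
    (Finset.mem_filter.2 ⟨Finset.mem_range.2 (Nat.lt_succ_of_le ht), h⟩)))

theorem omega_le_iff {j : ℕ} {q : ℤ} :
    Omega SA k j ≤ q ↔ -1 ≤ q ∧ ∀ t ≤ k, SA t < SA j → (SA t : ℤ) ≤ q := by
  simp only [Omega, Finset.max'_le_iff, Finset.mem_insert, Finset.mem_image, Finset.mem_filter,
    Finset.mem_range, forall_eq_or_imp]
  constructor
  · rintro ⟨h1, h2⟩
    exact ⟨h1, fun t ht hlt => h2 _ ⟨t, ⟨by omega, hlt⟩, rfl⟩⟩
  · rintro ⟨h1, h2⟩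
    exact ⟨h1, fun _ ⟨t, ⟨ht, hlt⟩, he⟩ => he ▸ h2 t (by omega) hlt⟩

theorem omega_lt (SA : ℕ → ℕ) (k j : ℕ) : Omega SA k j < SA j := by
  simp only [Omega, Finset.max'_lt_iff, Finset.mem_insert, Finset.mem_image, Finset.mem_filter,
    forall_eq_or_imp]
  exact ⟨by omega, fun _ ⟨t, ⟨_, hlt⟩, he⟩ => he ▸ Int.ofNat_lt.2 hlt⟩

theorem omega_eq_neg_one_or (SA : ℕ → ℕ) (k j : ℕ) :
    Omega SA k j = -1 ∨ ∃ t ≤ k, (SA t : ℤ) = Omega SA k j := by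
  have hmem := Finset.max'_mem _ (Finset.insert_nonempty (-1 : ℤ)
    (((Finset.range (k + 1)).filter (fun t => SA t < SA j)).image (fun t => (SA t : ℤ))))
  rw [← Omega, Finset.mem_insert, Finset.mem_image] at hmem
  obtain h | ⟨t, ht, he⟩ := hmem
  · exact Or.inl h
  · exact Or.inr ⟨t, Nat.lt_succ_iff.1 (Finset.mem_range.1 (Finset.mem_filter.1 ht).1), he⟩

theorem exists_omega_le_lt (hS : Sentinel S n) (hSA : IsSuffixArray S n SA) {q : ℤ}
    (h1 : -1 ≤ q) (h2 : q < n) : ∃ j ≤ k, Omega SA k j ≤ q ∧ q < SA j := by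
  set T := (Finset.range (k + 1)).filter (fun t => q < (SA t : ℤ))
  have h0 : 0 ∈ T := Finset.mem_filter.2 ⟨by simp, by rw [hSA.zero_eq hS]; exact h2⟩
  obtain ⟨j, hjT, hmin⟩ := Finset.exists_min_image T SA ⟨0, h0⟩
  obtain ⟨hj, hqj⟩ := Finset.mem_filter.1 hjT
  refine ⟨j, Nat.lt_succ_iff.1 (Finset.mem_range.1 hj), omega_le_iff.2 ⟨h1, ?_⟩, hqj⟩
  intro t ht hlt
  by_contra! hqt
  have htT : t ∈ T := Finset.mem_filter.2 ⟨Finset.mem_range.2 (Nat.lt_succ_of_le ht), hqt⟩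
  exact (hmin t htT).not_gt hlt

theorem eq_of_omega_le_lt (hSA : IsSuffixArray S n SA) (hk : k ≤ n) {q : ℤ} {j j' : ℕ}
    (hj : j ≤ k) (hj' : j' ≤ k) (h1 : Omega SA k j ≤ q) (h2 : q < SA j)
    (h1' : Omega SA k j' ≤ q) (h2' : q < SA j') : j = j' := by
  rcases lt_trichotomy (SA j) (SA j') with h | h | h
  · have := le_omega hj h
    omega
  · exact hSA.1.injOn (hj.trans hk) (hj'.trans hk) h
  · have := le_omega hj' h
    omega

noncomputable def wordOf (SA : ℕ → ℕ) (k : ℕ) (q : ℤ) : ℕ :=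
  if h : ∃ j ≤ k, Omega SA k j ≤ q ∧ q < SA j then h.choose else 0

theorem wordOf_spec (hS : Sentinel S n) (hSA : IsSuffixArray S n SA) {q : ℤ}
    (h1 : -1 ≤ q) (h2 : q < n) :
    wordOf SA k q ≤ k ∧ Omega SA k (wordOf SA k q) ≤ q ∧ q < SA (wordOf SA k q) := by
  have h := exists_omega_le_lt (k := k) hS hSA h1 h2
  rw [wordOf, dif_pos h]
  exact h.choose_spec

theorem wordOf_eq (hS : Sentinel S n) (hSA : IsSuffixArray S n SA) (hk : k ≤ n)
    {q : ℤ} {j : ℕ} (hj : j ≤ k) (h1 : Omega SA k j ≤ q) (h2 : q < SA j) : wordOf SA k q = j := by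
  have hq1 : -1 ≤ q := (neg_one_le_omega SA k j).trans h1
  have hq2 : q < n := h2.trans_le (Int.ofNat_le.2 (hSA.le (hj.trans hk)))
  obtain ⟨hw, hw1, hw2⟩ := wordOf_spec (k := k) hS hSA hq1 hq2
  exact eq_of_omega_le_lt hSA hk hw hj hw1 hw2 h1 h2

theorem neg_one_le_posZ (n q : ℕ) : -1 ≤ posZ n q := by
  unfold posZ; split <;> omega

theorem posZ_lt {q : ℕ} (h : q ≤ n) : posZ n q < n := by
  unfold posZ; split <;> omega

theorem posZ_of_ne {q : ℕ} (h : q ≠ n) : posZ n q = q := if_neg h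

theorem exists_posZ_eq {q : ℤ} (h1 : -1 ≤ q) (h2 : q < n) : ∃ b ≤ n, posZ n b = q := by
  by_cases hq : q = -1
  · exact ⟨n, le_rfl, by rw [posZ, if_pos rfl, hq]⟩
  · exact ⟨q.toNat, by omega, by rw [posZ, if_neg (by omega)]; omega⟩

theorem posZ_eq_omega_wordOf_iff (hS : Sentinel S n) (hSA : IsSuffixArray S n SA) (hk : k ≤ n)
    {r : ℕ} (hr : r ≤ n) :
    posZ n (SA r) = Omega SA k (wordOf SA k (posZ n (SA r))) ↔ r ≤ k := by
  obtain ⟨hj, h1, h2⟩ := wordOf_spec (k := k) hS hSA (neg_one_le_posZ n (SA r))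
    (posZ_lt (hSA.le hr))
  set j := wordOf SA k (posZ n (SA r))
  by_cases hr0 : r = 0
  · have hpos : posZ n (SA r) = -1 := by rw [posZ, if_pos ((hSA.eq_length_iff hS hr).2 hr0)]
    have := neg_one_le_omega SA k j
    exact ⟨fun _ => hr0 ▸ Nat.zero_le k, fun _ => by omega⟩
  have hpos : posZ n (SA r) = SA r := posZ_of_ne (mt (hSA.eq_length_iff hS hr).1 hr0)
  rw [hpos] at h1 h2 ⊢
  constructor
  · intro h
    obtain h' | ⟨t, ht, he⟩ := omega_eq_neg_one_or SA k j
    · omega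
    · have : t = r := hSA.1.injOn (ht.trans hk) hr (by omega)
      exact this ▸ ht
  · intro h
    have := le_omega h (Int.ofNat_lt.1 h2)
    omega

end Partition

section Words

variable {S SA : ℕ → ℕ} {n k : ℕ}

theorem Sc_nonneg (S : ℕ → ℕ) (n : ℕ) (q : ℤ) : 0 ≤ Sc S n q := by
  unfold Sc; split <;> omega

theorem Sc_natCast (S : ℕ → ℕ) {a : ℕ} (h : a < n) : Sc S n a = S a := by
  simp [Sc, h]

def wordSuffix (S : ℕ → ℕ) (n : ℕ) (SA : ℕ → ℕ) (k : ℕ)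
    (q : ℤ) (j : ℕ) : List ℤ :=
  (List.range ((SA j : ℤ) - q).toNat).map (fun t : ℕ => Sc S n (q + t)) ++ [(j : ℤ) - (k + 1)]

-- `wordList` coerces `List.range _` to `List ℤ` through the list monad.
theorem wordM_eq_wordSuffix (S : ℕ → ℕ) (n : ℕ) (SA : ℕ → ℕ) (k j : ℕ) :
    wordM S n SA k j = wordSuffix S n SA k (Omega SA k j) j := by
  simp [wordM, wordList, wordSuffix, ← List.map_eq_flatMap, List.map_map, Function.comp_def]

theorem wordSuffix_self (S : ℕ → ℕ) (n : ℕ) (SA : ℕ → ℕ) (k j : ℕ) :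
    wordSuffix S n SA k (SA j) j = [(j : ℤ) - (k + 1)] := by
  simp [wordSuffix]

theorem wordSuffix_of_lt {q : ℤ} {j : ℕ} (h : q < SA j) :
    wordSuffix S n SA k q j = Sc S n q :: wordSuffix S n SA k (q + 1) j := by
  rw [wordSuffix, wordSuffix,
    show ((SA j : ℤ) - q).toNat = ((SA j : ℤ) - (q + 1)).toNat + 1 by omega,
    List.range_succ_eq_map]
  simp only [List.map_cons, List.map_map, List.cons_append, Nat.cast_zero, add_zero]
  congr 2
  exact List.map_congr_left fun t _ => by simp only [Function.comp_apply]; congr 1; push_cast; ring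

theorem length_wordSuffix (S : ℕ → ℕ) (n : ℕ) (SA : ℕ → ℕ) (k : ℕ) (q : ℤ) (j : ℕ) :
    (wordSuffix S n SA k q j).length = ((SA j : ℤ) - q).toNat + 1 := by
  simp [wordSuffix]

theorem drop_wordSuffix {q : ℤ} {j : ℕ} : ∀ {p : ℕ}, q + p ≤ SA j →
    (wordSuffix S n SA k q j).drop p = wordSuffix S n SA k (q + p) j
  | 0, _ => by simp
  | p + 1, h => by
    rw [wordSuffix_of_lt (by omega), List.drop_succ_cons, drop_wordSuffix (by omega)]
    congr 1
    push_cast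
    ring

theorem getD_wordSuffix_of_lt {q : ℤ} {j t : ℕ} (h : t < ((SA j : ℤ) - q).toNat) :
    (wordSuffix S n SA k q j).getD t 0 = Sc S n (q + t) := by
  rw [wordSuffix, List.getD_append _ _ _ _ (by simpa using h)]
  simp [h]

theorem getD_wordSuffix_length (S : ℕ → ℕ) (n : ℕ) (SA : ℕ → ℕ) (k : ℕ) (q : ℤ) (j : ℕ) :
    (wordSuffix S n SA k q j).getD ((SA j : ℤ) - q).toNat 0 = (j : ℤ) - (k + 1) := by
  rw [wordSuffix, List.getD_append_right _ _ _ _ (by simp)]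
  simp

theorem drop_wordM (h1 : Omega SA k j ≤ q) (h2 : q ≤ SA j) :
    (wordM S n SA k j).drop (q - Omega SA k j).toNat = wordSuffix S n SA k q j := by
  rw [wordM_eq_wordSuffix, drop_wordSuffix (by omega)]
  congr 1
  omega

theorem eq_and_eq_of_drop_wordM_eq {j j' p p' : ℕ} (hp : p < (wordM S n SA k j).length)
    (hp' : p' < (wordM S n SA k j').length)
    (h : (wordM S n SA k j).drop p = (wordM S n SA k j').drop p') : j = j' ∧ p = p' := by
  simp only [wordM, List.length_append, List.length_singleton] at hp hp'
  obtain ⟨hj, hlen⟩ := List.drop_concat_inj (by omega) (by omega) h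
  obtain rfl : j = j' := by omega
  exact ⟨rfl, by omega⟩

theorem bwtW_wordM {SAW DAW : ℕ → ℕ} {i j : ℕ} {q : ℤ} (hD : DAW i = j)
    (hP : SAW i = (q - Omega SA k j).toNat) (h1 : Omega SA k j ≤ q) (h2 : q ≤ SA j) :
    bwtW (wordM S n SA k) SAW DAW i =
      if q = Omega SA k j then (j : ℤ) - (k + 1) else Sc S n (q - 1) := by
  have hlt := omega_lt SA k j
  rw [bwtW, hD, hP, wordM_eq_wordSuffix, length_wordSuffix]
  split_ifs with hq
  · rw [hq, sub_self, Int.toNat_zero, zero_add, Nat.add_sub_cancel,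
      Nat.mod_eq_of_lt (Nat.lt_succ_self _), getD_wordSuffix_length]
  · rw [show (q - Omega SA k j).toNat + (((SA j : ℤ) - Omega SA k j).toNat + 1) - 1
        = (q - Omega SA k j).toNat - 1 + (((SA j : ℤ) - Omega SA k j).toNat + 1) by omega,
      Nat.add_mod_right, Nat.mod_eq_of_lt (by omega), getD_wordSuffix_of_lt (by omega)]
    congr 1
    omega

end Words

section Comparison

variable {S SA : ℕ → ℕ} {n k : ℕ}

theorem wordSuffix_lt_of_sfx_lt (hS : Sentinel S n) (hSA : IsSuffixArray S n SA) (hk : k ≤ n)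
    {a a' j j' : ℕ} (hj : j ≤ k) (hj' : j' ≤ k) (h1 : Omega SA k j ≤ a) (h2 : a < SA j)
    (h1' : Omega SA k j' ≤ a') (h2' : a' < SA j') (h : sfx S n a < sfx S n a') :
    wordSuffix S n SA k a j < wordSuffix S n SA k a' j' := by
  have hSAj := hSA.le (hj.trans hk)
  have hSAj' := hSA.le (hj'.trans hk)
  have ha : a < n := by omega
  have ha' : a' < n := by omega
  rw [sfx_of_lt S ha, sfx_of_lt S ha', List.cons_lt_cons_iff] at h
  rw [wordSuffix_of_lt (Int.ofNat_lt.2 h2), wordSuffix_of_lt (Int.ofNat_lt.2 h2'),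
    Sc_natCast S ha, Sc_natCast S ha', List.cons_lt_cons_iff]
  obtain h | ⟨hhead, htail⟩ := h
  · exact Or.inl (Int.ofNat_lt.2 h)
  refine Or.inr ⟨by rw [hhead], ?_⟩
  obtain ⟨b, hb, hSAb⟩ := hSA.exists_eq (show a + 1 ≤ n by omega)
  obtain ⟨b', hb', hSAb'⟩ := hSA.exists_eq (show a' + 1 ≤ n by omega)
  rcases (show a + 1 ≤ SA j by omega).eq_or_lt with hend | hmid <;>
    rcases (show a' + 1 ≤ SA j' by omega).eq_or_lt with hend' | hmid'
  · -- both words end here: their markers are ordered by the ranks of `a + 1` and `a' + 1`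
    rw [← hSAb, ← hSAb'] at htail
    have := hSA.lt_of_sfx_lt hb hb' htail
    have hjb : j = b := hSA.1.injOn (hj.trans hk) hb (by omega)
    have hjb' : j' = b' := hSA.1.injOn (hj'.trans hk) hb' (by omega)
    rw [show (a : ℤ) + 1 = SA j by omega, show (a' : ℤ) + 1 = SA j' by omega, wordSuffix_self,
      wordSuffix_self]
    exact List.Lex.rel (by omega)
  · rw [show (a : ℤ) + 1 = SA j by omega, wordSuffix_self,
      wordSuffix_of_lt (show (a' : ℤ) + 1 < SA j' by omega)]
    exact List.Lex.rel (by have := Sc_nonneg S n (a' + 1); omega)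
  · -- `a + 1` lies strictly inside `W_j`, so its rank exceeds `k ≥ j'`, the rank of `a' + 1`
    exfalso
    rw [← hSAb, ← hSAb'] at htail
    have hb'j' : b' = j' := hSA.1.injOn hb' (hj'.trans hk) (by omega)
    have hbj' : b < j' := hb'j' ▸ hSA.lt_of_sfx_lt hb hb' htail
    have := le_omega (k := k) (hbj'.le.trans hj') (show SA b < SA j by omega)
    omega
  · exact_mod_cast wordSuffix_lt_of_sfx_lt hS hSA hk hj hj' (by omega) hmid (by omega) hmid' htail
termination_by SA j - a

end Comparison

section Ranks

variable {S SA : ℕ → ℕ} {n k : ℕ}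

/-- The claimed `i`-th smallest suffix of the collection is `W'_{rankDoc i}` read from
position `rankPos i`: for `i ≤ k` the lone marker `#_i`, and for `i = k + 1 + r` the position of
`S` of rank `r` (in the rotated coordinates of `posZ`) inside the word containing it. -/
noncomputable def rankDoc (SA : ℕ → ℕ) (n k i : ℕ) : ℕ :=
  if i ≤ k then i else wordOf SA k (posZ n (SA (i - (k + 1))))

def rankPos (SA : ℕ → ℕ) (n k i : ℕ) : ℤ :=
  if i ≤ k then SA i else posZ n (SA (i - (k + 1)))

theorem rankDoc_of_le {i : ℕ} (h : i ≤ k) : rankDoc SA n k i = i := if_pos h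

theorem rankPos_of_le {i : ℕ} (h : i ≤ k) : rankPos SA n k i = SA i := if_pos h

theorem rankDoc_add (SA : ℕ → ℕ) (n k r : ℕ) :
    rankDoc SA n k (k + 1 + r) = wordOf SA k (posZ n (SA r)) := by
  rw [rankDoc, if_neg (by omega), Nat.add_sub_cancel_left]

theorem rankPos_add (SA : ℕ → ℕ) (n k r : ℕ) :
    rankPos SA n k (k + 1 + r) = posZ n (SA r) := by
  rw [rankPos, if_neg (by omega), Nat.add_sub_cancel_left]

theorem rankDoc_spec (hS : Sentinel S n) (hSA : IsSuffixArray S n SA) {i : ℕ}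
    (hi : i < n + 1 + (k + 1)) :
    rankDoc SA n k i ≤ k ∧ Omega SA k (rankDoc SA n k i) ≤ rankPos SA n k i ∧
      rankPos SA n k i ≤ SA (rankDoc SA n k i) ∧
      (k < i → rankPos SA n k i < SA (rankDoc SA n k i)) := by
  unfold rankDoc rankPos
  split_ifs with hik
  · exact ⟨hik, (omega_lt SA k i).le, le_rfl, fun h => absurd hik (not_le.2 h)⟩
  · obtain ⟨h1, h2, h3⟩ := wordOf_spec (k := k) hS hSA (neg_one_le_posZ n _)
      (posZ_lt (hSA.le (show i - (k + 1) ≤ n by omega)))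
    exact ⟨h1, h2, h3.le, fun _ => h3⟩

theorem wordSuffix_posZ_lt (hS : Sentinel S n) (hSA : IsSuffixArray S n SA) (hk : k ≤ n)
    {r r' : ℕ} (hrr' : r < r') (hr' : r' ≤ n) :
    wordSuffix S n SA k (posZ n (SA r)) (wordOf SA k (posZ n (SA r))) <
      wordSuffix S n SA k (posZ n (SA r')) (wordOf SA k (posZ n (SA r'))) := by
  have hr : r ≤ n := by omega
  obtain ⟨hj, h1, h2⟩ :=
    wordOf_spec (k := k) hS hSA (neg_one_le_posZ n (SA r)) (posZ_lt (hSA.le hr))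
  obtain ⟨hj', h1', h2'⟩ :=
    wordOf_spec (k := k) hS hSA (neg_one_le_posZ n (SA r')) (posZ_lt (hSA.le hr'))
  have hSAr' : SA r' ≠ n := mt (hSA.eq_length_iff hS hr').1 (by omega)
  rw [posZ_of_ne hSAr'] at hj' h1' h2' ⊢
  by_cases hr0 : r = 0
  · have hpos : posZ n (SA r) = -1 := by rw [posZ, if_pos ((hSA.eq_length_iff hS hr).2 hr0)]
    rw [hpos] at h2 ⊢
    have hlt' : SA r' < n := lt_of_le_of_ne (hSA.le hr') hSAr'
    rw [wordSuffix_of_lt h2, wordSuffix_of_lt h2', Sc_natCast S hlt']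
    exact List.Lex.rel (by simpa [Sc] using hS.2 _ hlt')
  · have hSAr : SA r ≠ n := mt (hSA.eq_length_iff hS hr).1 hr0
    rw [posZ_of_ne hSAr] at hj h1 h2 ⊢
    exact wordSuffix_lt_of_sfx_lt hS hSA hk hj hj' h1 (Int.ofNat_lt.1 h2) h1'
      (Int.ofNat_lt.1 h2') (hSA.2 r r' hr hr' hrr')

theorem strictMonoOn_rankSuffix (hS : Sentinel S n) (hSA : IsSuffixArray S n SA) (hk : k ≤ n) :
    StrictMonoOn (fun i => wordSuffix S n SA k (rankPos SA n k i) (rankDoc SA n k i))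
      (Iio (n + 1 + (k + 1))) := by
  intro i hi i' hi' hii'
  simp only [mem_Iio] at hi hi'
  by_cases hik' : i' ≤ k
  · have hik := hii'.le.trans hik'
    simp only [rankPos_of_le hik, rankDoc_of_le hik, rankPos_of_le hik', rankDoc_of_le hik',
      wordSuffix_self]
    exact List.Lex.rel (by omega)
  have hpos' := (rankDoc_spec hS hSA hi').2.2.2 (by omega)
  by_cases hik : i ≤ k
  · simp only [rankPos_of_le hik, rankDoc_of_le hik, wordSuffix_self]
    rw [wordSuffix_of_lt hpos']
    exact List.Lex.rel (by have := Sc_nonneg S n (rankPos SA n k i'); omega)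
  · obtain ⟨r, rfl⟩ : ∃ r, i = k + 1 + r := ⟨i - (k + 1), by omega⟩
    obtain ⟨r', rfl⟩ : ∃ r', i' = k + 1 + r' := ⟨i' - (k + 1), by omega⟩
    simp only [rankPos_add, rankDoc_add]
    exact wordSuffix_posZ_lt hS hSA hk (by omega) (by omega)

theorem image_rankSuffix (hS : Sentinel S n) (hSA : IsSuffixArray S n SA) (hk : k ≤ n) :
    (fun i => wordSuffix S n SA k (rankPos SA n k i) (rankDoc SA n k i)) ''
      Iio (n + 1 + (k + 1)) = suffixes (wordM S n SA k) (k + 1) := by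
  ext s
  constructor
  · rintro ⟨i, hi, rfl⟩
    obtain ⟨hj, h1, h2, -⟩ := rankDoc_spec hS hSA hi
    refine ⟨rankDoc SA n k i, by omega, _, ?_, drop_wordM h1 h2⟩
    rw [wordM_eq_wordSuffix, length_wordSuffix]
    omega
  · rintro ⟨j, hj, p, hp, rfl⟩
    rw [wordM_eq_wordSuffix, length_wordSuffix] at hp
    have hlt := omega_lt SA k j
    rw [wordM_eq_wordSuffix, drop_wordSuffix (by omega)]
    rcases (show Omega SA k j + p ≤ SA j by omega).eq_or_lt with hend | hmid
    · refine ⟨j, by simp only [mem_Iio]; omega, ?_⟩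
      dsimp only
      rw [rankPos_of_le (by omega), rankDoc_of_le (by omega), hend]
    · obtain ⟨b, hb, hbq⟩ := exists_posZ_eq (n := n)
        ((neg_one_le_omega SA k j).trans (by omega))
        (hmid.trans_le (Int.ofNat_le.2 (hSA.le (by omega))))
      obtain ⟨r, hr, rfl⟩ := hSA.exists_eq hb
      refine ⟨k + 1 + r, by simp only [mem_Iio]; omega, ?_⟩
      dsimp only
      rw [rankPos_add, rankDoc_add, hbq, wordOf_eq hS hSA hk (by omega) (by omega) hmid]

end Ranks

section BWT

variable {S SA SAW DAW : ℕ → ℕ} {n k : ℕ}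

theorem IsMSA.eq_rankDoc_rankPos (hS : Sentinel S n) (hSA : IsSuffixArray S n SA) (hk : k ≤ n)
    (hMSA : IsMSA (wordM S n SA k) (k + 1) (n + 1 + (k + 1)) SAW DAW) {i : ℕ}
    (hi : i < n + 1 + (k + 1)) :
    DAW i = rankDoc SA n k i ∧
      SAW i = (rankPos SA n k i - Omega SA k (rankDoc SA n k i)).toNat := by
  have hdrop := hMSA.strictMonoOn.eqOn_of_image_eq (strictMonoOn_rankSuffix hS hSA hk)
    (by rw [hMSA.image_eq, image_rankSuffix hS hSA hk]) hi
  obtain ⟨hj, h1, h2, -⟩ := rankDoc_spec hS hSA hi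
  dsimp only at hdrop
  rw [← drop_wordM h1 h2] at hdrop
  refine eq_and_eq_of_drop_wordM_eq (hMSA.1 i hi).2 ?_ hdrop
  rw [wordM_eq_wordSuffix, length_wordSuffix]
  omega

theorem bwtW_wordM_of_le (hS : Sentinel S n) (hSA : IsSuffixArray S n SA) (hk : k ≤ n)
    (hMSA : IsMSA (wordM S n SA k) (k + 1) (n + 1 + (k + 1)) SAW DAW) {i : ℕ} (hi : i ≤ k) :
    bwtW (wordM S n SA k) SAW DAW i = bwtS S n SA i := by
  obtain ⟨hD, hP⟩ := hMSA.eq_rankDoc_rankPos hS hSA hk (by omega : i < n + 1 + (k + 1))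
  rw [rankDoc_of_le hi] at hD hP
  rw [rankPos_of_le hi] at hP
  have hlt := omega_lt SA k i
  rw [bwtW_wordM hD hP hlt.le le_rfl, if_neg hlt.ne', bwtS]

theorem bwtW_wordM_add (hS : Sentinel S n) (hSA : IsSuffixArray S n SA) (hk : k ≤ n)
    (hMSA : IsMSA (wordM S n SA k) (k + 1) (n + 1 + (k + 1)) SAW DAW) {r : ℕ} (hr : r ≤ n) :
    bwtW (wordM S n SA k) SAW DAW (k + 1 + r) =
      if r ≤ k then (rankDoc SA n k (k + 1 + r) : ℤ) - (k + 1) else bwtS S n SA r := by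
  obtain ⟨hD, hP⟩ := hMSA.eq_rankDoc_rankPos hS hSA hk (by omega : k + 1 + r < n + 1 + (k + 1))
  obtain ⟨-, h1, h2, -⟩ := rankDoc_spec hS hSA (by omega : k + 1 + r < n + 1 + (k + 1))
  rw [bwtW_wordM hD hP h1 h2, rankPos_add, rankDoc_add]
  simp only [posZ_eq_omega_wordOf_iff hS hSA hk hr]
  split_ifs
  · rfl
  · rw [posZ_of_ne (mt (hSA.eq_length_iff hS hr).1 (by omega)), bwtS]

end BWT

/-- Partition Theorem: with `l = k+1` and `m = (n+1) + l`,
`BWT(W)[i] = BWT(S)[i]` for `i < l`, `BWT(W)[i]` is a marker `#` (a negative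
character) for `l ≤ i < 2l`, and `BWT(W)[i] = BWT(S)[i-l]` for `2l ≤ i < m`;
consequently `BWT(S) = BWT(W)[0..l-1] ++ BWT(W)[2l..m-1]`. -/
theorem partition_theorem (S SA SAW DAW : ℕ → ℕ) (n k : ℕ) (hk : k < n)
    (hS : Sentinel S n) (hSA : IsSuffixArray S n SA)
    (hMSA : IsMSA (wordM S n SA k) (k+1) (n+1+(k+1)) SAW DAW) :
    (∀ i ≤ k, bwtW (wordM S n SA k) SAW DAW i = bwtS S n SA i) ∧
    (∀ i : ℕ, k + 1 ≤ i → i < 2*(k+1) → bwtW (wordM S n SA k) SAW DAW i < 0) ∧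
    (∀ i : ℕ, 2*(k+1) ≤ i → i < n+1+(k+1) →
      bwtW (wordM S n SA k) SAW DAW i = bwtS S n SA (i - (k+1))) ∧
    (List.range (k+1)).map (bwtW (wordM S n SA k) SAW DAW) ++
      (List.range (n - k)).map (fun t => bwtW (wordM S n SA k) SAW DAW (2*(k+1) + t))
      = (List.range (n+1)).map (bwtS S n SA) := by
  have hlow : ∀ i ≤ k, bwtW (wordM S n SA k) SAW DAW i = bwtS S n SA i :=
    fun i hi => bwtW_wordM_of_le hS hSA hk.le hMSA hi
  have hhigh : ∀ i : ℕ, 2 * (k + 1) ≤ i → i < n + 1 + (k + 1) →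
      bwtW (wordM S n SA k) SAW DAW i = bwtS S n SA (i - (k + 1)) := by
    intro i h1 h2
    obtain ⟨r, rfl⟩ : ∃ r, i = k + 1 + r := ⟨i - (k + 1), by omega⟩
    rw [bwtW_wordM_add hS hSA hk.le hMSA (by omega), if_neg (by omega), Nat.add_sub_cancel_left]
  refine ⟨hlow, fun i h1 h2 => ?_, hhigh, ?_⟩
  · obtain ⟨r, rfl⟩ : ∃ r, i = k + 1 + r := ⟨i - (k + 1), by omega⟩
    have := (rankDoc_spec hS hSA (by omega : k + 1 + r < n + 1 + (k + 1))).1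
    rw [bwtW_wordM_add hS hSA hk.le hMSA (by omega), if_pos (by omega)]
    omega
  · rw [show n + 1 = k + 1 + (n - k) by omega]
    refine List.map_range_append_map_range_eq hlow fun t ht => ?_
    rw [hhigh _ (by omega) (by omega)]
    congr 1
    omega
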